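/- If (M →^∂ N, ·, {−,−}) is a braided crossed module of Lie K-algebras with (M →^∂ N, ·) perfect as a crossed module, then c = (c₁, c₂) : (N ⊗ M →^{Id_N ⊗ ∂} N ⊗ N, *, ⦃−,−⦄) → (M →^∂ N, ·, {−,−}), with c₁(n ⊗ m) = n·m and c₂(n ⊗ n') = [n,n'], is a morphism of braided crossed modules and a compatible central extension. -/

import Mathlib

universe u

/-- The Lie bracket as a bilinear map. -/
def bracketMap (K : Type u) [CommRing K] (M : Type u) [LieRing M] [LieAlgebra K M] :
    M →ₗ[K] M →ₗ[K] M :=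
  LinearMap.mk₂ K (fun a b => ⁅a, b⁆) add_lie smul_lie lie_add lie_smul

/-- Axioms for a crossed module of Lie `K`-algebras `(d : M → N, act)`. -/
structure LieXMod (K : Type u) [CommRing K] (M N : Type u)
    [LieRing M] [LieAlgebra K M] [LieRing N] [LieAlgebra K N]
    (d : M →ₗ⁅K⁆ N) (act : N →ₗ[K] M →ₗ[K] M) : Prop where
  act_lie : ∀ n n' m, act ⁅n, n'⁆ m = act n (act n' m) - act n' (act n m)
  lie_act : ∀ n m m', act n ⁅m, m'⁆ = ⁅act n m, m'⁆ + ⁅m, act n m'⁆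
  equivar : ∀ n m, d (act n m) = ⁅n, d m⁆
  peiffer : ∀ m m', act (d m) m' = ⁅m, m'⁆

/-- Axioms `BLie1`–`BLie6` for a braiding on a crossed module of Lie algebras. -/
structure LieBraiding (K : Type u) [CommRing K] (M N : Type u)
    [LieRing M] [LieAlgebra K M] [LieRing N] [LieAlgebra K N]
    (d : M →ₗ⁅K⁆ N) (act : N →ₗ[K] M →ₗ[K] M)
    (br : N →ₗ[K] N →ₗ[K] M) : Prop where
  b1 : ∀ n n', d (br n n') = ⁅n, n'⁆
  b2 : ∀ m m', br (d m) (d m') = ⁅m, m'⁆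
  b3 : ∀ m n, br (d m) n = - act n m
  b4 : ∀ n m, br n (d m) = act n m
  b5 : ∀ n n' n'', br n ⁅n', n''⁆ = br ⁅n, n'⁆ n'' - br ⁅n, n''⁆ n'
  b6 : ∀ n n' n'', br ⁅n, n'⁆ n'' = br n ⁅n', n''⁆ - br n' ⁅n, n''⁆

/-- `T`, together with the bilinear pairing `t`, is the non-abelian tensor product
of the Lie algebras `A` and `B` acting on each other via `actAB` and `actBA`:
it satisfies the defining relations of the presentation and the universal property. -/
structure IsNATensor (K : Type u) [CommRing K] (A B : Type u)
    [LieRing A] [LieAlgebra K A] [LieRing B] [LieAlgebra K B]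
    (actAB : A →ₗ[K] B →ₗ[K] B) (actBA : B →ₗ[K] A →ₗ[K] A)
    (T : Type u) [LieRing T] [LieAlgebra K T]
    (t : A →ₗ[K] B →ₗ[K] T) : Prop where
  rel3a : ∀ a a' b, t ⁅a, a'⁆ b = t a (actAB a' b) - t a' (actAB a b)
  rel3b : ∀ a b b', t a ⁅b, b'⁆ = t (actBA b' a) b - t (actBA b a) b'
  rel4 : ∀ a b a' b', ⁅t a b, t a' b'⁆ = - t (actBA b a) (actAB a' b')
  lift : ∀ (C : Type u) [LieRing C] [LieAlgebra K C] (f : A →ₗ[K] B →ₗ[K] C),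
      (∀ a a' b, f ⁅a, a'⁆ b = f a (actAB a' b) - f a' (actAB a b)) →
      (∀ a b b', f a ⁅b, b'⁆ = f (actBA b' a) b - f (actBA b a) b') →
      (∀ a b a' b', ⁅f a b, f a' b'⁆ = - f (actBA b a) (actAB a' b')) →
      ∃! φ : T →ₗ⁅K⁆ C, ∀ a b, φ (t a b) = f a b

/-- `T` with pairing `t` is the non-abelian tensor square of `N` (adjoint actions). -/
def IsNATensorSq (K : Type u) [CommRing K] (N : Type u) [LieRing N] [LieAlgebra K N]
    (T : Type u) [LieRing T] [LieAlgebra K T] (t : N →ₗ[K] N →ₗ[K] T) : Prop :=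
  IsNATensor K N N (bracketMap K N) (bracketMap K N) T t

/-- The action `m ⋆ n = ⁅∂ m, n⁆` of `M` on `N` induced by the boundary map. -/
def coAct (K : Type u) [CommRing K] (M N : Type u) [LieRing M] [LieAlgebra K M]
    [LieRing N] [LieAlgebra K N] (d : M →ₗ⁅K⁆ N) : M →ₗ[K] N →ₗ[K] N :=
  LinearMap.mk₂ K (fun m n => ⁅(d m : N), n⁆)
    (fun m m' n => by simp [add_lie]) (fun c m n => by simp [smul_lie])
    (fun m n n' => by simp [lie_add]) (fun c m n => by simp [lie_smul])

/-! Both non-abelian tensor products are spanned, as modules, by their elementary tensors: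
the span is closed under the bracket by the relation `⁅a ⊗ b, a' ⊗ b'⁆ = -(b·a) ⊗ (a'·b')`,
and the universal property provides a section onto it. Hence identities between linear maps
out of `N ⊗ M` or `N ⊗ N` can be checked on elementary tensors. There the braiding of the
tensor side is expressed through the commutator map `c₂`:
`⦃x, n ⊗ n'⦄ = c₂ x ⊗ {n, n'}` and `⦃n ⊗ n', z⦄ = n ⊗ {n', c₂ z} - n' ⊗ {n, c₂ z}`.
Since the action `x * y` equals `⦃x, (Id ⊗ ∂) y⦄` (axiom BLie4 of the tensor side),
compatibility of `c` with the actions and centrality of both kernels follow from these two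
formulas, while surjectivity of `c` is exactly perfectness. -/

namespace IsNATensor

variable {K : Type u} [CommRing K] {A B : Type u} [LieRing A] [LieAlgebra K A]
  [LieRing B] [LieAlgebra K B] {actAB : A →ₗ[K] B →ₗ[K] B} {actBA : B →ₗ[K] A →ₗ[K] A}
  {T : Type u} [LieRing T] [LieAlgebra K T] {t : A →ₗ[K] B →ₗ[K] T}

theorem lie_mem_span_tmul (h : IsNATensor K A B actAB actBA T t) {x y : T}
    (hx : x ∈ Submodule.span K {z | ∃ a b, t a b = z})
    (hy : y ∈ Submodule.span K {z | ∃ a b, t a b = z}) :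
    ⁅x, y⁆ ∈ Submodule.span K {z | ∃ a b, t a b = z} := by
  have hle : Submodule.map₂ (bracketMap K T) (Submodule.span K {z | ∃ a b, t a b = z})
      (Submodule.span K {z | ∃ a b, t a b = z}) ≤ Submodule.span K {z | ∃ a b, t a b = z} := by
    rw [Submodule.map₂_span_span, Submodule.span_le]
    rintro _ ⟨_, ⟨a, b, rfl⟩, _, ⟨a', b', rfl⟩, rfl⟩
    simp only [bracketMap, LinearMap.mk₂_apply, h.rel4]
    exact neg_mem (Submodule.subset_span ⟨_, _, rfl⟩)
  exact hle (Submodule.apply_mem_map₂ _ hx hy)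

theorem span_eq_top (h : IsNATensor K A B actAB actBA T t) :
    Submodule.span K {z | ∃ a b, t a b = z} = ⊤ := by
  let S : LieSubalgebra K T :=
    { Submodule.span K {z | ∃ a b, t a b = z} with lie_mem' := h.lie_mem_span_tmul }
  let tS : A →ₗ[K] B →ₗ[K] S :=
    LinearMap.mk₂ K (fun a b => ⟨t a b, Submodule.subset_span ⟨a, b, rfl⟩⟩)
    (fun _ _ _ => Subtype.ext (by simp)) (fun _ _ _ => Subtype.ext (by simp))
    (fun _ _ _ => Subtype.ext (by simp)) (fun _ _ _ => Subtype.ext (by simp))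
  obtain ⟨φ, hφ, -⟩ := h.lift S tS (fun a a' b => Subtype.ext (h.rel3a a a' b))
    (fun a b b' => Subtype.ext (h.rel3b a b b')) (fun a b a' b' => Subtype.ext (h.rel4 a b a' b'))
  obtain ⟨ψ, -, huniq⟩ := h.lift T t h.rel3a h.rel3b h.rel4
  have hsection : S.incl.comp φ = LieHom.id :=
    (huniq _ fun a b => congrArg Subtype.val (hφ a b)).trans (huniq _ fun _ _ => rfl).symm
  refine eq_top_iff.2 fun x _ => ?_
  have hx : ((φ x : S) : T) = x := LieHom.congr_fun hsection x
  exact hx ▸ (φ x).2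

theorem linearMap_ext (h : IsNATensor K A B actAB actBA T t) {X : Type*} [AddCommGroup X]
    [Module K X] {f g : T →ₗ[K] X} (hfg : ∀ a b, f (t a b) = g (t a b)) : f = g :=
  LinearMap.ext_on h.span_eq_top (by rintro _ ⟨a, b, rfl⟩; exact hfg a b)

end IsNATensor

namespace IsNATensorSq

variable {K : Type u} [CommRing K] {N : Type u} [LieRing N] [LieAlgebra K N]
  {T : Type u} [LieRing T] [LieAlgebra K T] {t : N →ₗ[K] N →ₗ[K] T}

theorem lie_tmul (h : IsNATensorSq K N T t) {c : T →ₗ⁅K⁆ N} (hc : ∀ a b, c (t a b) = ⁅a, b⁆)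
    (x : T) (a b : N) : ⁅x, t a b⁆ = t (c x) ⁅a, b⁆ := by
  refine LinearMap.congr_fun (h.linearMap_ext (f := (bracketMap K T).flip (t a b))
    (g := (t.flip ⁅a, b⁆).comp (c : T →ₗ[K] N)) fun a' b' => ?_) x
  have h4 := h.rel4 a' b' a b
  simp only [bracketMap, LinearMap.mk₂_apply] at h4
  simp only [bracketMap, LinearMap.flip_apply, LinearMap.mk₂_apply, LinearMap.comp_apply,
    LieHom.coe_toLinearMap, hc]
  rw [h4, ← lie_skew b' a', map_neg, LinearMap.neg_apply, neg_neg]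

theorem lie_eq_zero_of_map_eq_zero (h : IsNATensorSq K N T t) {c : T →ₗ⁅K⁆ N}
    (hc : ∀ a b, c (t a b) = ⁅a, b⁆) {x : T} (hx : c x = 0) (y : T) : ⁅x, y⁆ = 0 := by
  refine LinearMap.congr_fun (h.linearMap_ext (f := bracketMap K T x) (g := 0)
    fun a b => ?_) y
  simp [bracketMap, h.lie_tmul hc, hx]

end IsNATensorSq

theorem LieHom.surjective_of_lieSpan_subset_range {K L L' : Type u} [CommRing K] [LieRing L]
    [LieAlgebra K L] [LieRing L'] [LieAlgebra K L'] (f : L →ₗ⁅K⁆ L') {s : Set L'}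
    (hs : LieSubalgebra.lieSpan K L' s = ⊤) (hsf : s ⊆ f.range) : Function.Surjective f := by
  rw [← LieHom.range_eq_top, eq_top_iff, ← hs, LieSubalgebra.lieSpan_le]
  exact hsf

section BraidedTensor

variable {K : Type u} [CommRing K] {M N : Type u} [LieRing M] [LieAlgebra K M]
  [LieRing N] [LieAlgebra K N] {d : M →ₗ⁅K⁆ N} {act : N →ₗ[K] M →ₗ[K] M}
  {br : N →ₗ[K] N →ₗ[K] M}
  {TM : Type u} [LieRing TM] [LieAlgebra K TM] {tm : N →ₗ[K] M →ₗ[K] TM}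
  {TN : Type u} [LieRing TN] [LieAlgebra K TN] {tn : N →ₗ[K] N →ₗ[K] TN}
  {D : TM →ₗ⁅K⁆ TN} {Br : TN →ₗ[K] TN →ₗ[K] TM} {c₁ : TM →ₗ⁅K⁆ M} {c₂ : TN →ₗ⁅K⁆ N}

theorem map_comm_boundary (hX : LieXMod K M N d act)
    (hTM : IsNATensor K N M act (coAct K M N d) TM tm)
    (hD : ∀ n m, D (tm n m) = tn n (d m)) (hc₁ : ∀ n m, c₁ (tm n m) = act n m)
    (hc₂ : ∀ n n', c₂ (tn n n') = ⁅n, n'⁆) (y : TM) :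
    d (c₁ y) = c₂ (D y) := by
  refine LinearMap.congr_fun (hTM.linearMap_ext (f := (d : M →ₗ[K] N).comp (c₁ : TM →ₗ[K] M))
    (g := (c₂ : TN →ₗ[K] N).comp (D : TM →ₗ[K] TN)) fun n m => ?_) y
  simp [hc₁, hD, hc₂, hX.equivar]

theorem braiding_apply_tmul (hTN : IsNATensorSq K N TN tn)
    (hBr : ∀ n₁ n₂ n₃ n₄, Br (tn n₁ n₂) (tn n₃ n₄) = tm ⁅n₁, n₂⁆ (br n₃ n₄))
    (hc₂ : ∀ n n', c₂ (tn n n') = ⁅n, n'⁆) (x : TN) (n₃ n₄ : N) :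
    Br x (tn n₃ n₄) = tm (c₂ x) (br n₃ n₄) := by
  refine LinearMap.congr_fun (hTN.linearMap_ext (f := Br.flip (tn n₃ n₄))
    (g := (tm.flip (br n₃ n₄)).comp (c₂ : TN →ₗ[K] N)) fun n₁ n₂ => ?_) x
  simp [hBr, hc₂]

theorem braiding_tmul_apply (hB : LieBraiding K M N d act br)
    (hTM : IsNATensor K N M act (coAct K M N d) TM tm) (hTN : IsNATensorSq K N TN tn)
    (hBr : ∀ n₁ n₂ n₃ n₄, Br (tn n₁ n₂) (tn n₃ n₄) = tm ⁅n₁, n₂⁆ (br n₃ n₄))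
    (hc₂ : ∀ n n', c₂ (tn n n') = ⁅n, n'⁆) (n₁ n₂ : N) (z : TN) :
    Br (tn n₁ n₂) z = tm n₁ (br n₂ (c₂ z)) - tm n₂ (br n₁ (c₂ z)) := by
  refine LinearMap.congr_fun (hTN.linearMap_ext (f := Br (tn n₁ n₂))
    (g := ((tm n₁).comp (br n₂) - (tm n₂).comp (br n₁)).comp (c₂ : TN →ₗ[K] N))
    fun n₃ n₄ => ?_) z
  simp [hBr, hc₂, hTM.rel3a, ← hB.b4, hB.b1]

theorem braiding_eq_zero_of_map_left (hTN : IsNATensorSq K N TN tn)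
    (hBr : ∀ n₁ n₂ n₃ n₄, Br (tn n₁ n₂) (tn n₃ n₄) = tm ⁅n₁, n₂⁆ (br n₃ n₄))
    (hc₂ : ∀ n n', c₂ (tn n n') = ⁅n, n'⁆) {x : TN} (hx : c₂ x = 0) (y : TN) : Br x y = 0 := by
  refine LinearMap.congr_fun (hTN.linearMap_ext (f := Br x) (g := 0) fun n₃ n₄ => ?_) y
  simp [braiding_apply_tmul hTN hBr hc₂, hx]

theorem braiding_eq_zero_of_map_right (hB : LieBraiding K M N d act br)
    (hTM : IsNATensor K N M act (coAct K M N d) TM tm) (hTN : IsNATensorSq K N TN tn)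
    (hBr : ∀ n₁ n₂ n₃ n₄, Br (tn n₁ n₂) (tn n₃ n₄) = tm ⁅n₁, n₂⁆ (br n₃ n₄))
    (hc₂ : ∀ n n', c₂ (tn n n') = ⁅n, n'⁆) (x : TN) {y : TN} (hy : c₂ y = 0) : Br x y = 0 := by
  refine LinearMap.congr_fun (hTN.linearMap_ext (f := Br.flip y) (g := 0) fun n₁ n₂ => ?_) x
  simp [braiding_tmul_apply hB hTM hTN hBr hc₂, hy]

theorem map_braiding (hB : LieBraiding K M N d act br) (hTN : IsNATensorSq K N TN tn)
    (hBr : ∀ n₁ n₂ n₃ n₄, Br (tn n₁ n₂) (tn n₃ n₄) = tm ⁅n₁, n₂⁆ (br n₃ n₄))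
    (hc₁ : ∀ n m, c₁ (tm n m) = act n m)
    (hc₂ : ∀ n n', c₂ (tn n n') = ⁅n, n'⁆) (x y : TN) :
    c₁ (Br x y) = br (c₂ x) (c₂ y) := by
  refine LinearMap.congr_fun (hTN.linearMap_ext (f := (c₁ : TM →ₗ[K] M).comp (Br x))
    (g := (br (c₂ x)).comp (c₂ : TN →ₗ[K] N)) fun n₃ n₄ => ?_) y
  simp [braiding_apply_tmul hTN hBr hc₂, hc₁, hc₂, ← hB.b4, hB.b1]

end BraidedTensor

theorem compatible_central_extension_general (K : Type u) [CommRing K] (M N : Type u) [LieRing M] [LieAlgebra K M]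
    [LieRing N] [LieAlgebra K N] (d : M →ₗ⁅K⁆ N) (act : N →ₗ[K] M →ₗ[K] M)
    (br : N →ₗ[K] N →ₗ[K] M) (hX : LieXMod K M N d act)
    (hB : LieBraiding K M N d act br)
    (TM : Type u) [LieRing TM] [LieAlgebra K TM] (tm : N →ₗ[K] M →ₗ[K] TM)
    (hTM : IsNATensor K N M act (coAct K M N d) TM tm)
    (TN : Type u) [LieRing TN] [LieAlgebra K TN] (tn : N →ₗ[K] N →ₗ[K] TN)
    (hTN : IsNATensorSq K N TN tn)
    (D : TM →ₗ⁅K⁆ TN) (hD : ∀ (n : N) (m : M), D (tm n m) = tn n (d m))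
    (A : TN →ₗ[K] TM →ₗ[K] TM)
    (Br : TN →ₗ[K] TN →ₗ[K] TM)
    (hBr : ∀ n₁ n₂ n₃ n₄ : N,
      Br (tn n₁ n₂) (tn n₃ n₄) = tm ⁅n₁, n₂⁆ (br n₃ n₄))
    (hBrB : LieBraiding K TM TN D A Br)
    (hperfX : LieSubalgebra.lieSpan K M {x : M | ∃ (n : N) (m : M), x = act n m} = ⊤ ∧
      LieSubalgebra.lieSpan K N {x : N | ∃ a b : N, x = ⁅a, b⁆} = ⊤)
    (c₁ : TM →ₗ⁅K⁆ M) (hc₁ : ∀ (n : N) (m : M), c₁ (tm n m) = act n m)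
    (c₂ : TN →ₗ⁅K⁆ N) (hc₂ : ∀ n n' : N, c₂ (tn n n') = ⁅n, n'⁆) :
    (∀ (x : TN) (y : TM), c₁ (A x y) = act (c₂ x) (c₁ y)) ∧
      (∀ y : TM, d (c₁ y) = c₂ (D y)) ∧
      (∀ x y : TN, c₁ (Br x y) = br (c₂ x) (c₂ y)) ∧
      Function.Surjective c₁ ∧ Function.Surjective c₂ ∧
      (∀ y : TM, c₁ y = 0 → ∀ x : TN, A x y = 0) ∧
      (∀ x : TN, c₂ x = 0 → (∀ y : TN, ⁅x, y⁆ = 0) ∧ ∀ y : TM, A x y = 0) := by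
  have hd : ∀ y, d (c₁ y) = c₂ (D y) := map_comm_boundary hX hTM hD hc₁ hc₂
  have hc₁Br : ∀ x y, c₁ (Br x y) = br (c₂ x) (c₂ y) := map_braiding hB hTN hBr hc₁ hc₂
  refine ⟨fun x y => ?_, hd, hc₁Br, ?_, ?_, fun y hy x => ?_, fun x hx => ⟨?_, fun y => ?_⟩⟩
  · rw [← hBrB.b4, hc₁Br, ← hd, hB.b4]
  · refine c₁.surjective_of_lieSpan_subset_range hperfX.1 ?_
    rintro _ ⟨n, m, rfl⟩
    exact ⟨tm n m, hc₁ n m⟩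
  · refine c₂.surjective_of_lieSpan_subset_range hperfX.2 ?_
    rintro _ ⟨n, n', rfl⟩
    exact ⟨tn n n', hc₂ n n'⟩
  · rw [← hBrB.b4]
    exact braiding_eq_zero_of_map_right hB hTM hTN hBr hc₂ x (by rw [← hd, hy, map_zero])
  · exact hTN.lie_eq_zero_of_map_eq_zero hc₂ hx
  · rw [← hBrB.b4]
    exact braiding_eq_zero_of_map_left hTN hBr hc₂ hx _

theorem compatible_central_extension (K : Type u) [CommRing K] (M N : Type u) [LieRing M] [LieAlgebra K M]
    [LieRing N] [LieAlgebra K N] (d : M →ₗ⁅K⁆ N) (act : N →ₗ[K] M →ₗ[K] M)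
    (br : N →ₗ[K] N →ₗ[K] M) (hX : LieXMod K M N d act)
    (hB : LieBraiding K M N d act br)
    (TM : Type u) [LieRing TM] [LieAlgebra K TM] (tm : N →ₗ[K] M →ₗ[K] TM)
    (hTM : IsNATensor K N M act (coAct K M N d) TM tm)
    (TN : Type u) [LieRing TN] [LieAlgebra K TN] (tn : N →ₗ[K] N →ₗ[K] TN)
    (hTN : IsNATensorSq K N TN tn)
    (D : TM →ₗ⁅K⁆ TN) (hD : ∀ (n : N) (m : M), D (tm n m) = tn n (d m))
    (A : TN →ₗ[K] TM →ₗ[K] TM)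
    (hA : ∀ (n₁ n₂ n₃ : N) (m : M),
      A (tn n₁ n₂) (tm n₃ m) = tm ⁅⁅n₁, n₂⁆, n₃⁆ m + tm n₃ (act ⁅n₁, n₂⁆ m))
    (Br : TN →ₗ[K] TN →ₗ[K] TM)
    (hBr : ∀ n₁ n₂ n₃ n₄ : N,
      Br (tn n₁ n₂) (tn n₃ n₄) = tm ⁅n₁, n₂⁆ (br n₃ n₄))
    (hBrB : LieBraiding K TM TN D A Br)
    (hperfX : LieSubalgebra.lieSpan K M {x : M | ∃ (n : N) (m : M), x = act n m} = ⊤ ∧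
      LieSubalgebra.lieSpan K N {x : N | ∃ a b : N, x = ⁅a, b⁆} = ⊤)
    (c₁ : TM →ₗ⁅K⁆ M) (hc₁ : ∀ (n : N) (m : M), c₁ (tm n m) = act n m)
    (c₂ : TN →ₗ⁅K⁆ N) (hc₂ : ∀ n n' : N, c₂ (tn n n') = ⁅n, n'⁆) :
    (∀ (x : TN) (y : TM), c₁ (A x y) = act (c₂ x) (c₁ y)) ∧
      (∀ y : TM, d (c₁ y) = c₂ (D y)) ∧
      (∀ x y : TN, c₁ (Br x y) = br (c₂ x) (c₂ y)) ∧
      Function.Surjective c₁ ∧ Function.Surjective c₂ ∧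
      (∀ y : TM, c₁ y = 0 → ∀ x : TN, A x y = 0) ∧
      (∀ x : TN, c₂ x = 0 → (∀ y : TN, ⁅x, y⁆ = 0) ∧ ∀ y : TM, A x y = 0) :=
  compatible_central_extension_general K M N d act br hX hB TM tm hTM TN tn hTN D hD A Br hBr hBrB
    hperfX c₁ hc₁ c₂ hc₂
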